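/- Function calls restore the caller's local store: if ⟨f(v₁, .., v_n) | G; L; N⟩ →* ⟨S_ret | G'; L'; N⟩ where S_ret is a value, tuple, or regular, then L' = L; i.e., the local store after a completed function call equals the local store at the call site. -/
import Mathlib


namespace Yul

abbrev Var := String

/-- Yul operational syntax: source-level statements and expressions merged with
    runtime constructs (modes, scoped blocks, break/continue frames, call frames, tuples). -/
inductive Term (Val Op Ext : Type) : Type where
  | block (ss : List (Term Val Op Ext))
  | fundef (f : Var) (ps rs : List Var) (body : Term Val Op Ext)
  | letdecl (xs : List Var) (e : Term Val Op Ext)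
  | assign (xs : List Var) (e : Term Val Op Ext)
  | ite (cond : Term Val Op Ext) (body : Term Val Op Ext)
  | switch (scrut : Term Val Op Ext) (cases : List (Val × Term Val Op Ext))
      (dflt : Term Val Op Ext)
  | forloop (init cond post body : Term Val Op Ext)
  | brk
  | cont
  | leave
  | call (f : Var) (args : List (Term Val Op Ext))
  | opcall (op : Op) (args : List (Term Val Op Ext))
  | var (x : Var)
  | val (v : Val)
  | regular
  | ext (m : Ext)
  | tuple (vs : List Val)
  | scopedBlock (ss : List (Term Val Op Ext)) (Lsave : Var → Option Val)
      (Nsave : Var → Option (List Var × List Var × Term Val Op Ext))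
  | brkFrame (s : Term Val Op Ext)
  | cntFrame (s : Term Val Op Ext)
  | callFrame (s : Term Val Op Ext) (Lsave : Var → Option Val) (rets : List Var)

/-- Local variable stores. -/
abbrev Store (Val : Type) := Var → Option Val

/-- Function namespaces. -/
abbrev NS (Val Op Ext : Type) := Var → Option (List Var × List Var × Term Val Op Ext)

variable {Val Op Ext Gl : Type}

def Dom (L : Store Val) : Set Var := {x | (L x).isSome}

/-- `restrict L1 L` is `L1 ↾ L` : restriction of `L1` to the domain of `L`. -/
def restrict (L1 L : Store Val) : Store Val :=
  fun x => if (L x).isSome then L1 x else none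

def updStore (L : Store Val) (x : Var) (v : Val) : Store Val :=
  fun y => if y = x then some v else L y

def updMany (L : Store Val) (xs : List Var) (vs : List Val) : Store Val :=
  (List.zip xs vs).foldl (fun L p => updStore L p.1 p.2) L

def emptyStore : Store Val := fun _ => none

def updNS (N : NS Val Op Ext) (f : Var)
    (d : List Var × List Var × Term Val Op Ext) : NS Val Op Ext :=
  fun y => if y = f then some d else N y

/-- `funsof`: extend the namespace with the functions defined at the top level of a block. -/
def extendFuns (ss : List (Term Val Op Ext)) (N : NS Val Op Ext) : NS Val Op Ext :=
  ss.foldl (fun N s =>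
    match s with
    | .fundef f ps rs body => updNS N f (ps, rs, body)
    | _ => N) N

/-- Return-value packaging: `⟨⟩ = regular`, `⟨v⟩ = v`, `⟨v⃗⟩` a tuple for more values. -/
def mkRet (vs : List Val) : Term Val Op Ext :=
  match vs with
  | [] => .regular
  | [v] => .val v
  | vs => .tuple vs

/-- A Yul dialect: truth/falsehood of values, the default value, and the
    (possibly failing) opcode evaluation relation `⇓_opc`. -/
structure Dialect (Val Op Ext Gl : Type) where
  isTrue : Val → Prop
  isFalse : Val → Prop
  zero : Val
  opc : Op → List Val → Gl → (List Val ⊕ Ext) → Gl → Prop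

def IsIrregularCore (t : Term Val Op Ext) : Prop :=
  t = .brk ∨ t = .cont ∨ t = .leave

/-- The modes `regular`, `break`, `continue`, `leave`. -/
def IsModeCore (t : Term Val Op Ext) : Prop :=
  t = .regular ∨ t = .brk ∨ t = .cont ∨ t = .leave

/-- All modes, including external irregular modes ℳ. -/
def IsMode (t : Term Val Op Ext) : Prop :=
  IsModeCore t ∨ ∃ m, t = .ext m

/-- Results of completed expressions/calls: a value, a tuple, or `regular`. -/
def IsRet (t : Term Val Op Ext) : Prop :=
  (∃ v, t = .val v) ∨ (∃ vs, t = .tuple vs) ∨ t = .regular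

/-- `S_ret ::= v | ⟨v⃗⟩ | 𝕄`. -/
def IsRetAny (t : Term Val Op Ext) : Prop := IsRet t ∨ IsModeCore t

/-- Evaluation contexts. -/
inductive Ctx (Val Op Ext : Type) : Type where
  | hole
  | scopedC (E : Ctx Val Op Ext) (rest : List (Term Val Op Ext)) (L : Store Val)
      (N : NS Val Op Ext)
  | letC (xs : List Var) (E : Ctx Val Op Ext)
  | assignC (xs : List Var) (E : Ctx Val Op Ext)
  | cntC (E : Ctx Val Op Ext)
  | brkC (E : Ctx Val Op Ext)
  | iteC (E : Ctx Val Op Ext) (body : Term Val Op Ext)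
  | switchC (E : Ctx Val Op Ext) (cases : List (Val × Term Val Op Ext))
      (dflt : Term Val Op Ext)
  | callC (f : Var) (before : List (Term Val Op Ext)) (E : Ctx Val Op Ext)
      (after : List Val)
  | opcallC (op : Op) (before : List (Term Val Op Ext)) (E : Ctx Val Op Ext)
      (after : List Val)
  | frameC (E : Ctx Val Op Ext) (L : Store Val) (rets : List Var)

def plug (E : Ctx Val Op Ext) (t : Term Val Op Ext) : Term Val Op Ext :=
  match E with
  | .hole => t
  | .scopedC E rest L N => .scopedBlock (plug E t :: rest) L N
  | .letC xs E => .letdecl xs (plug E t)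
  | .assignC xs E => .assign xs (plug E t)
  | .cntC E => .cntFrame (plug E t)
  | .brkC E => .brkFrame (plug E t)
  | .iteC E body => .ite (plug E t) body
  | .switchC E cs d => .switch (plug E t) cs d
  | .callC f before E after => .call f (before ++ plug E t :: after.map Term.val)
  | .opcallC op before E after => .opcall op (before ++ plug E t :: after.map Term.val)
  | .frameC E L rets => .callFrame (plug E t) L rets

/-- Base small-step reduction rules of Yul. -/
inductive Base (D : Dialect Val Op Ext Gl) :
    Term Val Op Ext → Gl → Store Val → NS Val Op Ext →
    Term Val Op Ext → Gl → Store Val → NS Val Op Ext → Prop where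
  | blockEnter (ss G L N) (h : ss ≠ []) :
      Base D (.block ss) G L N (.scopedBlock ss L N) G L (extendFuns ss N)
  | blockEmpty (G L N) :
      Base D (.block []) G L N .regular G L N
  | scopedNext (ss L0 N0 G L N) (h : ss ≠ []) :
      Base D (.scopedBlock (.regular :: ss) L0 N0) G L N (.scopedBlock ss L0 N0) G L N
  | scopedExitReg (L0 N0 G L N) :
      Base D (.scopedBlock [.regular] L0 N0) G L N .regular G (restrict L L0) N0
  | scopedExitIrr (m ss L0 N0 G L N) (h : IsIrregularCore m) :
      Base D (.scopedBlock (m :: ss) L0 N0) G L N m G (restrict L L0) N0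
  | fundefSkip (f ps rs body G L N) :
      Base D (.fundef f ps rs body) G L N .regular G L N
  | letSingle (x v G L N) (h : L x = none) :
      Base D (.letdecl [x] (.val v)) G L N .regular G (updStore L x v) N
  | letTuple (xs vs G L N) (hlen : xs.length = vs.length)
      (hfresh : ∀ x ∈ xs, L x = none) :
      Base D (.letdecl xs (.tuple vs)) G L N .regular G (updMany L xs vs) N
  | assignSingle (x v G L N) (h : (L x).isSome) :
      Base D (.assign [x] (.val v)) G L N .regular G (updStore L x v) N
  | assignTuple (xs vs G L N) (hlen : xs.length = vs.length)
      (hdom : ∀ x ∈ xs, (L x).isSome) :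
      Base D (.assign xs (.tuple vs)) G L N .regular G (updMany L xs vs) N
  | iteFalse (v body G L N) (h : D.isFalse v) :
      Base D (.ite (.val v) body) G L N .regular G L N
  | iteTrue (v body G L N) (h : D.isTrue v) :
      Base D (.ite (.val v) body) G L N body G L N
  | switchDefault (v cs d G L N) (h : ∀ c ∈ cs, c.1 ≠ v) :
      Base D (.switch (.val v) cs d) G L N d G L N
  | switchCase (c body pre post d G L N) (h : ∀ p ∈ pre, p.1 ≠ c) :
      Base D (.switch (.val c) (pre ++ (c, body) :: post) d) G L N body G L N
  | forInit (ss M Sp Sb G L N) (h : ss ≠ []) :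
      Base D (.forloop (.block ss) M Sp Sb) G L N
        (.block (ss ++ [.forloop (.block []) M Sp Sb])) G L N
  | forUnfold (M Sp Sb G L N) :
      Base D (.forloop (.block []) M Sp Sb) G L N
        (.brkFrame (.ite M
          (.block [.cntFrame Sb, Sp, .forloop (.block []) M Sp Sb]))) G L N
  | cntPass (m G L N) (h : m = .regular ∨ m = .brk ∨ m = .leave) :
      Base D (.cntFrame m) G L N m G L N
  | cntCatch (G L N) :
      Base D (.cntFrame .cont) G L N .regular G L N
  | brkPass (m G L N) (h : m = .regular ∨ m = .leave) :
      Base D (.brkFrame m) G L N m G L N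
  | brkCatch (G L N) :
      Base D (.brkFrame .brk) G L N .regular G L N
  | varLookup (x v G L N) (h : L x = some v) :
      Base D (.var x) G L N (.val v) G L N
  | callEnter (f vs ps rs body G L N) (hN : N f = some (ps, rs, body))
      (hlen : ps.length = vs.length) :
      Base D (.call f (vs.map Term.val)) G L N
        (.callFrame body L rs) G
        (updMany (updMany emptyStore rs (rs.map fun _ => D.zero)) ps vs) N
  | frameExit (m Lsave rs ws G L N) (hm : m = .leave ∨ m = .regular)
      (hws : List.Forall₂ (fun z w => L z = some w) rs ws) :
      Base D (.callFrame m Lsave rs) G L N (mkRet ws) G Lsave N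
  | opcallOk (op vs ws G G' L N) (h : D.opc op vs G (Sum.inl ws) G') :
      Base D (.opcall op (vs.map Term.val)) G L N (mkRet ws) G' L N
  | opcallErr (op vs m G G' L N) (h : D.opc op vs G (Sum.inr m) G') :
      Base D (.opcall op (vs.map Term.val)) G L N (.ext m) G' L N

/-- Configurations `⟨S | G; L; N⟩`. -/
abbrev Config (Val Op Ext Gl : Type) :=
  Term Val Op Ext × Gl × Store Val × NS Val Op Ext

/-- The small-step relation: base rules closed under evaluation contexts,
    plus the top-level propagation of external irregular modes. -/
inductive Step (D : Dialect Val Op Ext Gl) :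
    Config Val Op Ext Gl → Config Val Op Ext Gl → Prop where
  | ctx (E S G L N S' G' L' N') (h : Base D S G L N S' G' L' N') :
      Step D (plug E S, G, L, N) (plug E S', G', L', N')
  | extProp (E m G L N) (h : E ≠ Ctx.hole) :
      Step D (plug E (.ext m), G, L, N) (.ext m, G, L, N)

/-- Zero or more small steps. -/
abbrev Steps (D : Dialect Val Op Ext Gl) :
    Config Val Op Ext Gl → Config Val Op Ext Gl → Prop :=
  Relation.ReflTransGen (Step D)

mutual
/-- Big-step evaluation of statements `⟨S | G; L; N⟩ ⇓ ⟨𝕄 | G'; L'; N'⟩`. -/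
inductive Big (D : Dialect Val Op Ext Gl) :
    Term Val Op Ext → Gl → Store Val → NS Val Op Ext →
    Term Val Op Ext → Gl → Store Val → NS Val Op Ext → Prop where
  | blockB {ss M G L N G1 L1}
      (h : BigSeq D ss G L (extendFuns ss N) M G1 L1 (extendFuns ss N)) :
      Big D (.block ss) G L N M G1 (restrict L1 L) N
  | fundefB {f ps rs body G L N} :
      Big D (.fundef f ps rs body) G L N .regular G L N
  | brkB {G L N} : Big D .brk G L N .brk G L N
  | contB {G L N} : Big D .cont G L N .cont G L N
  | leaveB {G L N} : Big D .leave G L N .leave G L N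
  | letSingleB {x e v G L N G1 L1}
      (h1 : BigExp D e G L N (.val v) G1 L1 N) (h2 : L x = none) :
      Big D (.letdecl [x] e) G L N .regular G1 (updStore L1 x v) N
  | letTupleB {xs e vs G L N G1 L1}
      (h1 : BigExp D e G L N (.tuple vs) G1 L1 N)
      (hlen : xs.length = vs.length) (hfresh : ∀ x ∈ xs, L x = none) :
      Big D (.letdecl xs e) G L N .regular G1 (updMany L1 xs vs) N
  | assignSingleB {x e v G L N G1 L1}
      (h1 : BigExp D e G L N (.val v) G1 L1 N) (h2 : (L x).isSome) :
      Big D (.assign [x] e) G L N .regular G1 (updStore L1 x v) N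
  | assignTupleB {xs e vs G L N G1 L1}
      (h1 : BigExp D e G L N (.tuple vs) G1 L1 N)
      (hlen : xs.length = vs.length) (hdom : ∀ x ∈ xs, (L x).isSome) :
      Big D (.assign xs e) G L N .regular G1 (updMany L1 xs vs) N
  | exprB {M G L N G' L'}
      (h : BigExp D M G L N .regular G' L' N) :
      Big D M G L N .regular G' L' N
  | ifF {M body v G L N G0 L0}
      (h1 : BigExp D M G L N (.val v) G0 L0 N) (h2 : D.isFalse v) :
      Big D (.ite M body) G L N .regular G0 L0 N
  | ifT {M body v MM G L N G0 L0 G1 L1}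
      (h1 : BigExp D M G L N (.val v) G0 L0 N) (h2 : D.isTrue v)
      (h3 : Big D body G0 L0 N MM G1 L1 N) :
      Big D (.ite M body) G L N MM G1 L1 N
  | swD {M cs d v MM G L N G0 L0 G1 L1}
      (h1 : BigExp D M G L N (.val v) G0 L0 N)
      (h2 : ∀ c ∈ cs, c.1 ≠ v)
      (h3 : Big D d G0 L0 N MM G1 L1 N) :
      Big D (.switch M cs d) G L N MM G1 L1 N
  | swC {M pre c body post d MM G L N G0 L0 G1 L1}
      (h1 : BigExp D M G L N (.val c) G0 L0 N)
      (hpre : ∀ p ∈ pre, p.1 ≠ c)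
      (h3 : Big D body G0 L0 N MM G1 L1 N) :
      Big D (.switch M (pre ++ (c, body) :: post) d) G L N MM G1 L1 N
  | forInitB {ss M Sp Sb MM G L N G2 L2} (hne : ss ≠ [])
      (h : Big D (.block (ss ++ [.forloop (.block []) M Sp Sb])) G L N MM G2 L2 N) :
      Big D (.forloop (.block ss) M Sp Sb) G L N MM G2 L2 N
  | forFalseB {M Sp Sb v G L N G1 L1}
      (h1 : BigExp D M G L N (.val v) G1 L1 N) (h2 : D.isFalse v) :
      Big D (.forloop (.block []) M Sp Sb) G L N .regular G1 L1 N
  | forHalt1B {M Sp Sb v Mlb Mout G L N G1 L1 G2 L2}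
      (h1 : BigExp D M G L N (.val v) G1 L1 N) (h2 : D.isTrue v)
      (h3 : Big D Sb G1 L1 N Mlb G2 L2 N)
      (h4 : (Mlb = .leave ∧ Mout = .leave) ∨ (Mlb = .brk ∧ Mout = .regular)) :
      Big D (.forloop (.block []) M Sp Sb) G L N Mout G2 L2 N
  | forHalt2B {M Sp Sb v MM G L N G1 L1 G2 L2 G3 L3}
      (h1 : BigExp D M G L N (.val v) G1 L1 N) (h2 : D.isTrue v)
      (h3 : Big D Sb G1 L1 N MM G2 L2 N)
      (h4 : MM = .regular ∨ MM = .cont)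
      (h5 : Big D Sp G2 L2 N .leave G3 L3 N) :
      Big D (.forloop (.block []) M Sp Sb) G L N .leave G3 L3 N
  | forLoopB {M Sp Sb v MM MM' G L N G1 L1 G2 L2 G3 L3 G4 L4}
      (h1 : BigExp D M G L N (.val v) G1 L1 N) (h2 : D.isTrue v)
      (h3 : Big D Sb G1 L1 N MM G2 L2 N)
      (h4 : MM = .regular ∨ MM = .cont)
      (h5 : Big D Sp G2 L2 N .regular G3 L3 N)
      (h6 : Big D (.forloop (.block []) M Sp Sb) G3 L3 N MM' G4 L4 N) :
      Big D (.forloop (.block []) M Sp Sb) G L N MM' G4 L4 N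

/-- Big-step evaluation of statement sequences `⇓_seq`. -/
inductive BigSeq (D : Dialect Val Op Ext Gl) :
    List (Term Val Op Ext) → Gl → Store Val → NS Val Op Ext →
    Term Val Op Ext → Gl → Store Val → NS Val Op Ext → Prop where
  | nilB {G L N} : BigSeq D [] G L N .regular G L N
  | consReg {s ss MM G L N G1 L1 G2 L2}
      (h1 : Big D s G L N .regular G1 L1 N)
      (h2 : BigSeq D ss G1 L1 N MM G2 L2 N) :
      BigSeq D (s :: ss) G L N MM G2 L2 N
  | consIrr {s ss MM G L N G1 L1}
      (h1 : Big D s G L N MM G1 L1 N) (h2 : IsIrregularCore MM) :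
      BigSeq D (s :: ss) G L N MM G1 L1 N

/-- Big-step evaluation of expressions `⇓_exp`. -/
inductive BigExp (D : Dialect Val Op Ext Gl) :
    Term Val Op Ext → Gl → Store Val → NS Val Op Ext →
    Term Val Op Ext → Gl → Store Val → NS Val Op Ext → Prop where
  | identB {x v G L N} (h : L x = some v) :
      BigExp D (.var x) G L N (.val v) G L N
  | valB {v G L N} : BigExp D (.val v) G L N (.val v) G L N
  | funCallB {f args vs ps rs body MM ws G L N Gn Ln G'' L''}
      (hargs : BigArgs D args G L N vs Gn Ln)
      (hN : N f = some (ps, rs, body))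
      (hlen : ps.length = vs.length)
      (hbody : Big D body Gn
        (updMany (updMany emptyStore rs (rs.map fun _ => D.zero)) ps vs) N MM G'' L'' N)
      (hret : List.Forall₂ (fun z w => L'' z = some w) rs ws) :
      BigExp D (.call f args) G L N (mkRet ws) G'' Ln N
  | opCallB {op args vs ws G L N Gn Ln G''}
      (hargs : BigArgs D args G L N vs Gn Ln)
      (h : D.opc op vs Gn (Sum.inl ws) G'') :
      BigExp D (.opcall op args) G L N (mkRet ws) G'' Ln N

/-- Right-to-left evaluation of argument lists. -/
inductive BigArgs (D : Dialect Val Op Ext Gl) :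
    List (Term Val Op Ext) → Gl → Store Val → NS Val Op Ext →
    List Val → Gl → Store Val → Prop where
  | nilA {G L N} : BigArgs D [] G L N [] G L
  | consA {M Ms v vs G L N G1 L1 G2 L2}
      (htail : BigArgs D Ms G L N vs G1 L1)
      (hhead : BigExp D M G1 L1 N (.val v) G2 L2 N) :
      BigArgs D (M :: Ms) G L N (v :: vs) G2 L2
end

/-- Source-level syntax: no runtime constructs. -/
inductive IsSource : Term Val Op Ext → Prop where
  | block {ss} (h : ∀ s ∈ ss, IsSource s) : IsSource (.block ss)
  | fundef {f ps rs body} (h : IsSource body) : IsSource (.fundef f ps rs body)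
  | letdecl {xs e} (h : IsSource e) : IsSource (.letdecl xs e)
  | assign {xs e} (h : IsSource e) : IsSource (.assign xs e)
  | ite {c b} (h1 : IsSource c) (h2 : IsSource b) : IsSource (.ite c b)
  | switch {M cs d} (h1 : IsSource M) (h2 : ∀ c ∈ cs, IsSource c.2)
      (h3 : IsSource d) : IsSource (.switch M cs d)
  | forloop {i c p b} (h1 : IsSource i) (h2 : IsSource c) (h3 : IsSource p)
      (h4 : IsSource b) : IsSource (.forloop i c p b)
  | brk : IsSource .brk
  | cont : IsSource .cont
  | leave : IsSource .leave
  | call {f args} (h : ∀ a ∈ args, IsSource a) : IsSource (.call f args)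
  | opcall {op args} (h : ∀ a ∈ args, IsSource a) : IsSource (.opcall op args)
  | var {x} : IsSource (.var x)
  | val {v} : IsSource (.val v)

/-- Syntactic restriction on halting statements: `HaltOK inLoop inFun S` says that
    every `break`/`continue` in `S` occurs inside the body of some enclosing for-loop
    (not separated from it by a function definition) and every `leave` occurs inside
    some enclosing function body; `inLoop`/`inFun` record the ambient context. -/
inductive HaltOK : Bool → Bool → Term Val Op Ext → Prop where
  | block {il fn ss} (h : ∀ s ∈ ss, HaltOK il fn s) : HaltOK il fn (.block ss)
  | fundef {il fn f ps rs body} (h : HaltOK false true body) :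
      HaltOK il fn (.fundef f ps rs body)
  | letdecl {il fn xs e} (h : HaltOK il fn e) : HaltOK il fn (.letdecl xs e)
  | assign {il fn xs e} (h : HaltOK il fn e) : HaltOK il fn (.assign xs e)
  | ite {il fn c b} (h1 : HaltOK il fn c) (h2 : HaltOK il fn b) :
      HaltOK il fn (.ite c b)
  | switch {il fn M cs d} (h1 : HaltOK il fn M) (h2 : ∀ c ∈ cs, HaltOK il fn c.2)
      (h3 : HaltOK il fn d) : HaltOK il fn (.switch M cs d)
  | forloop {il fn i c p b} (h1 : HaltOK il fn i) (h2 : HaltOK il fn c)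
      (h3 : HaltOK il fn p) (h4 : HaltOK true fn b) :
      HaltOK il fn (.forloop i c p b)
  | brk {fn} : HaltOK true fn .brk
  | cont {fn} : HaltOK true fn .cont
  | leave {il} : HaltOK il true .leave
  | call {il fn f args} (h : ∀ a ∈ args, HaltOK il fn a) : HaltOK il fn (.call f args)
  | opcall {il fn op args} (h : ∀ a ∈ args, HaltOK il fn a) :
      HaltOK il fn (.opcall op args)
  | var {il fn x} : HaltOK il fn (.var x)
  | val {il fn v} : HaltOK il fn (.val v)

/-- Frames: break-catching frames `⟦·⟧_brk` or scoped-block frames `{·}_L^N`. -/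
inductive Frame (Val : Type) where
  | brkF
  | blockF (L : Store Val)

/-- Apply a list of frames (innermost first), all blocks annotated with namespace `N`. -/
def applyFrames (N : NS Val Op Ext) :
    List (Frame Val) → Term Val Op Ext → Term Val Op Ext
  | [], t => t
  | .brkF :: fs, t => applyFrames N fs (.brkFrame t)
  | .blockF L :: fs, t => applyFrames N fs (.scopedBlock [t] L N)

/-- Ascending chain of block-frame domains, starting from `d` (innermost first). -/
def Asc (d : Set Var) : List (Frame Val) → Prop
  | [] => True
  | .brkF :: fs => Asc d fs
  | .blockF L :: fs => d ⊆ Dom L ∧ Asc (Dom L) fs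


section Aux
variable {Val Op Ext Gl : Type} {D : Dialect Val Op Ext Gl}

/-- Terms that cannot step further. -/
def Terminal (t : Term Val Op Ext) : Prop :=
  (∃ v, t = .val v) ∨ (∃ vs, t = .tuple vs) ∨ t = .regular ∨ (∃ m, t = .ext m)

lemma terminal_of_isRet {t : Term Val Op Ext} (h : IsRet t) : Terminal t := by
  rcases h with ⟨v, rfl⟩ | ⟨vs, rfl⟩ | rfl
  · exact Or.inl ⟨v, rfl⟩
  · exact Or.inr (Or.inl ⟨vs, rfl⟩)
  · exact Or.inr (Or.inr (Or.inl rfl))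

lemma terminal_mkRet (ws : List Val) : Terminal (mkRet ws : Term Val Op Ext) := by
  match ws with
  | [] => exact Or.inr (Or.inr (Or.inl rfl))
  | [v] => exact Or.inl ⟨v, rfl⟩
  | v :: w :: ws => exact Or.inr (Or.inl ⟨v :: w :: ws, rfl⟩)

lemma no_base_terminal {S S' : Term Val Op Ext} {G G' : Gl} {L L' : Store Val}
    {N N' : NS Val Op Ext} (hb : Base D S G L N S' G' L' N') (ht : Terminal S) :
    False := by
  cases hb <;> simp [Terminal] at ht

lemma plug_eq_hole_of_terminal {E : Ctx Val Op Ext} {S : Term Val Op Ext}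
    (ht : Terminal (plug E S)) : E = .hole := by
  cases E <;> simp [plug, Terminal] at ht ⊢

lemma no_step_terminal {t : Term Val Op Ext} {G : Gl} {L : Store Val}
    {N : NS Val Op Ext} {c' : Config Val Op Ext Gl}
    (ht : Terminal t) (hs : Step D (t, G, L, N) c') : False := by
  cases hs with
  | ctx E S G L N S' G' L' N' h =>
      have hE := plug_eq_hole_of_terminal ht
      subst hE
      exact no_base_terminal h ht
  | extProp E m G L N h =>
      exact h (plug_eq_hole_of_terminal ht)

lemma steps_terminal {t : Term Val Op Ext} {G : Gl} {L : Store Val}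
    {N : NS Val Op Ext} {c' : Config Val Op Ext Gl}
    (ht : Terminal t) (hs : Steps D (t, G, L, N) c') : c' = (t, G, L, N) := by
  rcases Relation.ReflTransGen.cases_head hs with h | ⟨c, hstep, _⟩
  · exact h.symm
  · exact (no_step_terminal ht hstep).elim

lemma plug_frame {E : Ctx Val Op Ext} {S t : Term Val Op Ext} {Ls : Store Val}
    {rs : List Var} (h : plug E S = .callFrame t Ls rs) :
    (E = .hole ∧ S = .callFrame t Ls rs) ∨
    ∃ E', E = .frameC E' Ls rs ∧ plug E' S = t := by
  cases E <;> simp [plug] at h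
  case hole => exact Or.inl ⟨rfl, h⟩
  case frameC E' L' rs' =>
    obtain ⟨h1, h2, h3⟩ := h
    subst h2; subst h3
    exact Or.inr ⟨E', rfl, h1⟩

lemma plug_eq_val {E : Ctx Val Op Ext} {S : Term Val Op Ext} {v : Val}
    (h : plug E S = .val v) : E = .hole ∧ S = .val v := by
  cases E <;> simp [plug] at h
  exact ⟨rfl, h⟩

lemma plug_call {E : Ctx Val Op Ext} {S : Term Val Op Ext} {f : Var} {vs : List Val}
    (h : plug E S = .call f (vs.map Term.val)) :
    (E = .hole ∧ S = .call f (vs.map Term.val)) ∨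
    ∃ w, ∃ E', plug E' S = .val w := by
  cases E <;> simp [plug] at h
  case hole => exact Or.inl ⟨rfl, h⟩
  case callC f' before E' after =>
    obtain ⟨hf, hl⟩ := h
    have hmem : plug E' S ∈ vs.map Term.val := by rw [← hl]; simp
    obtain ⟨w, _, hw⟩ := List.mem_map.1 hmem
    exact Or.inr ⟨w, E', hw.symm⟩

/-- Inside a call frame with saved store `L`, any completed reduction restores `L`. -/
lemma frame_restores {L L' : Store Val} {rs : List Var} {Sret : Term Val Op Ext}
    {G' : Gl} {N' : NS Val Op Ext} (hret : IsRet Sret) :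
    ∀ c : Config Val Op Ext Gl, Steps D c (Sret, G', L', N') →
    ∀ t G1 L1 N1, c = (.callFrame t L rs, G1, L1, N1) → L' = L := by
  intro c h
  induction h using Relation.ReflTransGen.head_induction_on with
  | refl =>
      intro t G1 L1 N1 hc
      have h1 : Sret = .callFrame t L rs := congrArg Prod.fst hc
      subst h1
      simp [IsRet] at hret
  | head hstep htail ih =>
      intro t G1 L1 N1 hc
      cases hstep with
      | ctx E S G2 L2 N2 S' G2' L2' N2' hbase =>
          have hplug : plug E S = .callFrame t L rs := congrArg Prod.fst hc
          rcases plug_frame hplug with ⟨hE, hS⟩ | ⟨E', hE, hS⟩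
          · -- frame exit
            subst hE; subst hS
            cases hbase with
            | frameExit m Lsave rs' ws G L N hm hws =>
                have := steps_terminal (terminal_mkRet ws) htail
                exact congrArg (fun c => c.2.2.1) this
          · subst hE
            exact ih (plug E' S') G2' L2' N2' rfl
      | extProp E m G2 L2 N2 hne =>
          have := steps_terminal (Or.inr (Or.inr (Or.inr ⟨m, rfl⟩))) htail
          have hSret : Sret = Term.ext m := congrArg Prod.fst this
          subst hSret
          simp [IsRet] at hret
end Aux

/-- Function calls restore the caller's local store: a completed
    call (reducing to a value, tuple, or `regular`) leaves the local store as
    it was at the call site. -/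
theorem call_restores_store {Val Op Ext Gl : Type} (D : Dialect Val Op Ext Gl)
    {f : Var} {vs : List Val} {Sret : Term Val Op Ext} {G G' : Gl}
    {L L' : Store Val} {N : NS Val Op Ext}
    (hret : IsRet Sret)
    (h : Steps D (Term.call f (vs.map Term.val), G, L, N) (Sret, G', L', N)) :
    L' = L := by
  rcases Relation.ReflTransGen.cases_head h with heq | ⟨c, hstep, htail⟩
  · have hS : Sret = .call f (vs.map Term.val) := (congrArg Prod.fst heq).symm
    subst hS
    simp [IsRet] at hret
  · obtain ⟨T, hT⟩ : ∃ T : Term Val Op Ext, (Term.call f (vs.map Term.val) : Term Val Op Ext) = T := ⟨_, rfl⟩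
    rw [hT] at hstep
    cases hstep with
    | ctx E S G2 L2 N2 S' G2' L2' N2' hbase =>
        rcases plug_call hT.symm with ⟨hE, hS⟩ | ⟨w, E', hw⟩
        · subst hE; subst hS
          obtain ⟨args, hargs⟩ : ∃ a, (vs.map Term.val : List (Term Val Op Ext)) = a := ⟨_, rfl⟩
          rw [hargs] at hbase
          cases hbase with
          | callEnter f' vs' ps rs body hN hlen =>
              exact frame_restores hret _ htail _ _ _ _ rfl
        · obtain ⟨hE', hS⟩ := plug_eq_val hw
          subst hS
          exact (no_base_terminal hbase (Or.inl ⟨w, rfl⟩)).elim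
    | extProp E m G2 L2 N2 hne =>
        rcases plug_call hT.symm with ⟨hE, hS⟩ | ⟨w, E', hw⟩
        · simp at hS
        · obtain ⟨hE', hS⟩ := plug_eq_val hw
          simp at hS

end Yul
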